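/- Let G be a finitely generated group whose upper FC-series reaches G after finitely many steps (G ∈ FC_n for some n). Then G is virtually nilpotent; more precisely G has a nilpotent normal-in-itself subgroup of finite index of nilpotency class at most n. -/

import Mathlib

universe u

/-- The conjugacy class of `g` in `G`. -/
def conjClassSet {G : Type u} [Group G] (g : G) : Set G := {h | ∃ x : G, x * g * x⁻¹ = h}

/-- An FC-element is one with a finite conjugacy class. -/
def IsFCElement {G : Type u} [Group G] (g : G) : Prop := (conjClassSet g).Finite

/-- A group is ICC if every nonidentity element has an infinite conjugacy class. -/
def IsICC (G : Type u) [Group G] : Prop := ∀ g : G, g ≠ 1 → (conjClassSet g).Infinite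

/-- The FC-center of a group: the subgroup of elements with finite conjugacy class. -/
def FCCenter (G : Type u) [Group G] : Subgroup G where
  carrier := {g | IsFCElement g}
  one_mem' := Set.Finite.subset (Set.finite_singleton 1) (by rintro h ⟨x, rfl⟩; simp)
  mul_mem' := by
    intro a b ha hb
    refine ((Set.Finite.image (fun p : G × G => p.1 * p.2) (ha.prod hb)).subset ?_)
    rintro h ⟨x, rfl⟩
    exact ⟨(x * a * x⁻¹, x * b * x⁻¹), ⟨⟨x, rfl⟩, ⟨x, rfl⟩⟩, by group⟩
  inv_mem' := by
    intro a ha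
    refine (ha.image Inv.inv).subset ?_
    rintro h ⟨x, rfl⟩
    exact ⟨x * a * x⁻¹, ⟨x, rfl⟩, by group⟩

instance FCCenter_normal (G : Type u) [Group G] : (FCCenter G).Normal := by
  constructor
  intro n hn g
  refine Set.Finite.subset hn ?_
  rintro h ⟨x, rfl⟩
  exact ⟨x * g, by group⟩

/-- One step of the upper FC-series: the preimage of the FC-center of the quotient. -/
noncomputable def fcStep {G : Type u} [Group G] (F : Subgroup G) : Subgroup G :=
  (FCCenter (G ⧸ Subgroup.normalClosure (F : Set G))).comap
    (QuotientGroup.mk' (Subgroup.normalClosure (F : Set G)))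

/-- The finitely-indexed upper FC-series of `G`. -/
noncomputable def natFCSeries (G : Type u) [Group G] : ℕ → Subgroup G
  | 0 => ⊥
  | n + 1 => fcStep (natFCSeries G n)

/-! Induction on `n` along the FC-centre `F₁ = natFCSeries G 1`. The quotient `G ⧸ F₁` is again
finitely generated and reaches the top of its FC-series one step earlier, so it has a finite-index
subgroup of class `≤ n - 1`; the preimage `K` of that subgroup has finite index in `G` and
`K.lowerCentralSeries (n - 1) ≤ F₁`. Since `K` is finitely generated, each term of its lower
central series is the normal closure of finitely many elements; here these have finitely many
conjugates, so the centralizer `C` in `K` of that term, being the centralizer of finitely many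
elements with finite conjugacy classes, has finite index. Then
`C.lowerCentralSeries n ≤ ⁅K.lowerCentralSeries (n - 1), C⁆ = ⊥`. -/

section

open Subgroup

variable {G H : Type u} [Group G] [Group H]

theorem conjClassSet_eq_conjugatesOf (g : G) : conjClassSet g = conjugatesOf g := by
  ext h
  exact isConj_iff.symm

theorem conjClassSet_map_of_surjective {f : G →* H} (hf : Function.Surjective f) (g : G) :
    conjClassSet (f g) = f '' conjClassSet g := by
  ext h
  constructor
  · rintro ⟨x, rfl⟩
    obtain ⟨y, rfl⟩ := hf x
    exact ⟨y * g * y⁻¹, ⟨y, rfl⟩, by simp⟩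
  · rintro ⟨_, ⟨y, rfl⟩, rfl⟩
    exact ⟨f y, by simp⟩

theorem IsFCElement.map_of_surjective {f : G →* H} (hf : Function.Surjective f) {g : G}
    (hg : IsFCElement g) : IsFCElement (f g) := by
  rw [IsFCElement, conjClassSet_map_of_surjective hf]
  exact hg.image f

theorem IsFCElement.of_map_of_injective {f : H →* G} (hf : Function.Injective f) {x : H}
    (hx : IsFCElement (f x)) : IsFCElement x := by
  refine (hx.preimage hf.injOn).subset ?_
  rintro _ ⟨y, rfl⟩
  exact ⟨f y, by simp⟩

theorem IsFCElement.finiteIndex_centralizer {g : G} (hg : IsFCElement g) :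
    (centralizer {g}).FiniteIndex := by
  have horbit : MulAction.orbit (ConjAct G) g = conjClassSet g := by
    rw [ConjAct.orbit_eq_carrier_conjClasses, conjClassSet_eq_conjugatesOf]
    ext h
    rw [ConjClasses.mem_carrier_iff_mk_eq, ConjClasses.mk_eq_mk_iff_isConj]
    exact isConj_comm
  constructor
  rw [centralizer_eq_comap_stabilizer]
  refine (index_comap_of_surjective (f := (ConjAct.toConjAct : G ≃* ConjAct G).toMonoidHom)
    _ ConjAct.toConjAct.surjective).trans_ne ?_
  rw [MulAction.index_stabilizer, horbit]
  exact Set.ncard_ne_zero_of_mem (a := g) ⟨1, by group⟩ hg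

theorem finiteIndex_centralizer_normalClosure {T : Set G} (hT : T.Finite)
    (hFC : ∀ t ∈ T, IsFCElement t) : (centralizer (normalClosure T : Set G)).FiniteIndex := by
  have hconj : (Group.conjugatesOfSet T).Finite :=
    hT.biUnion fun t ht => conjClassSet_eq_conjugatesOf t ▸ hFC t ht
  have hconjFC : ∀ g ∈ Group.conjugatesOfSet T, IsFCElement g := by
    intro g hg
    obtain ⟨t, ht, htg⟩ := Group.mem_conjugatesOfSet_iff.mp hg
    obtain ⟨x, rfl⟩ := isConj_iff.mp htg
    exact (hFC t ht).map_of_surjective (f := (MulAut.conj x).toMonoidHom)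
      (MulAut.conj x).surjective
  rw [normalClosure, centralizer_closure, centralizer_eq_iInf, ← hconj.coe_toFinset]
  exact finiteIndex_iInf' _ fun g hg =>
    (hconjFC g (hconj.mem_toFinset.mp hg)).finiteIndex_centralizer

theorem mem_fcStep_iff {F : Subgroup G} {g : G} :
    g ∈ fcStep F ↔ IsFCElement (QuotientGroup.mk' (normalClosure (F : Set G)) g) :=
  Iff.rfl

instance fcStep_normal (F : Subgroup G) : (fcStep F).Normal :=
  (FCCenter_normal _).comap _

instance natFCSeries_normal : ∀ n, (natFCSeries G n).Normal
  | 0 => inferInstanceAs (⊥ : Subgroup G).Normal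
  | n + 1 => fcStep_normal (natFCSeries G n)

theorem mem_natFCSeries_one_iff {g : G} : g ∈ natFCSeries G 1 ↔ IsFCElement g := by
  have hinj :
      Function.Injective (QuotientGroup.mk' (normalClosure ((⊥ : Subgroup G) : Set G))) := by
    rw [← MonoidHom.ker_eq_bot_iff, QuotientGroup.ker_mk', normalClosure_eq_self]
  exact ⟨fun hg => hg.of_map_of_injective hinj,
    fun hg => hg.map_of_surjective (QuotientGroup.mk'_surjective _)⟩

theorem map_fcStep_le {f : G →* H} (hf : Function.Surjective f) {A : Subgroup G}
    {B : Subgroup H} (hAB : A.map f ≤ B) : (fcStep A).map f ≤ fcStep B := by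
  have hncl : normalClosure (A : Set G) ≤ (normalClosure (B : Set H)).comap f :=
    normalClosure_le_normal ((map_le_iff_le_comap.mp hAB).trans
      (comap_mono le_normalClosure))
  let φ := QuotientGroup.map _ _ f hncl
  have hφ : Function.Surjective φ :=
    QuotientGroup.map_surjective_of_surjective _ _ f ((QuotientGroup.mk_surjective).comp hf) hncl
  rintro _ ⟨g, hg, rfl⟩
  exact (mem_fcStep_iff.mp hg).map_of_surjective hφ

theorem map_natFCSeries_succ_le (k : ℕ) :
    (natFCSeries G (k + 1)).map (QuotientGroup.mk' (natFCSeries G 1)) ≤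
      natFCSeries (G ⧸ natFCSeries G 1) k := by
  induction k with
  | zero => exact ((Subgroup.map_eq_bot_iff _).mpr (QuotientGroup.ker_mk' _).ge).le
  | succ k ih => exact map_fcStep_le (QuotientGroup.mk'_surjective _) ih

theorem natFCSeries_quotient_eq_top {n : ℕ} (h : natFCSeries G (n + 1) = ⊤) :
    natFCSeries (G ⧸ natFCSeries G 1) n = ⊤ := by
  rw [eq_top_iff, ← map_top_of_surjective _ (QuotientGroup.mk'_surjective (natFCSeries G 1)), ← h]
  exact map_natFCSeries_succ_le n

theorem normalClosure_le_center_of_commute {S T : Set G} (hS : closure S = ⊤)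
    (hTS : ∀ t ∈ T, ∀ s ∈ S, Commute t s) : normalClosure T ≤ center G := by
  refine normalClosure_le_normal fun t ht => ?_
  rw [SetLike.mem_coe, center_eq_iInf hS]
  exact mem_iInf.mpr fun s => mem_iInf.mpr fun hs =>
    mem_centralizer_singleton_iff.mpr (hTS t ht s hs).eq

open scoped commutatorElement in
theorem normalClosure_image2_commutatorElement {S T : Set G} (hS : closure S = ⊤) :
    normalClosure (Set.image2 (⁅·, ·⁆) T S) = ⁅normalClosure T, ⊤⁆ := by
  set R := normalClosure (Set.image2 (⁅·, ·⁆) T S)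
  refine le_antisymm (normalClosure_le_normal ?_) ?_
  · rintro _ ⟨t, ht, s, -, rfl⟩
    exact commutator_mem_commutator (subset_normalClosure ht) (mem_top s)
  · have hπ := QuotientGroup.mk'_surjective R
    rw [← QuotientGroup.ker_mk' R, ← Subgroup.map_eq_bot_iff, map_commutator,
      map_top_of_surjective _ hπ, commutator_eq_bot_iff_le_centralizer, coe_top,
      centralizer_univ, map_normalClosure _ _ hπ]
    refine normalClosure_le_center_of_commute (S := QuotientGroup.mk' R '' S) ?_ ?_
    · rw [← MonoidHom.map_closure, hS, map_top_of_surjective _ hπ]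
    · rintro _ ⟨t, ht, rfl⟩ _ ⟨s, hs, rfl⟩
      rw [← commutatorElement_eq_one_iff_commute, ← map_commutatorElement, ← MonoidHom.mem_ker,
        QuotientGroup.ker_mk']
      exact subset_normalClosure (Set.mem_image2_of_mem ht hs)

theorem exists_finite_normalClosure_eq_lowerCentralSeries [Group.FG G] (n : ℕ) :
    ∃ T : Set G, T.Finite ∧ normalClosure T = (⊤ : Subgroup G).lowerCentralSeries n := by
  obtain ⟨S, hS, hSfin⟩ := Group.fg_iff.mp ‹Group.FG G›
  induction n with
  | zero => exact ⟨S, hSfin, le_top.antisymm (hS ▸ closure_le_normalClosure)⟩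
  | succ n ih =>
    obtain ⟨T, hTfin, hT⟩ := ih
    exact ⟨_, hTfin.image2 _ hSfin, by
      rw [normalClosure_image2_commutatorElement hS, hT, Subgroup.lowerCentralSeries_succ]⟩

theorem upperCentralSeries_eq_top_iff_lowerCentralSeries_eq_bot (N : Subgroup G) (n : ℕ) :
    Subgroup.upperCentralSeries N n = ⊤ ↔ N.lowerCentralSeries n = ⊥ := by
  rw [← lowerCentralSeries_eq_bot_iff_upperCentralSeries_eq_top,
    ← top_subtype_lowerCentralSeries N n, map_eq_bot_iff_of_injective _ N.subtype_injective]

theorem exists_finiteIndex_lowerCentralSeries_succ_eq_bot [Group.FG G] {n : ℕ}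
    (hFC : ∀ x ∈ (⊤ : Subgroup G).lowerCentralSeries n, IsFCElement x) :
    ∃ N : Subgroup G, N.FiniteIndex ∧ N.lowerCentralSeries (n + 1) = ⊥ := by
  obtain ⟨T, hTfin, hT⟩ := exists_finite_normalClosure_eq_lowerCentralSeries (G := G) n
  refine ⟨centralizer ((⊤ : Subgroup G).lowerCentralSeries n), ?_, ?_⟩
  · rw [← hT]
    exact finiteIndex_centralizer_normalClosure hTfin fun t ht =>
      hFC t (hT ▸ subset_normalClosure ht)
  · rw [Subgroup.lowerCentralSeries_succ, commutator_comm, commutator_eq_bot_iff_le_centralizer]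
    exact centralizer_le (lowerCentralSeries_mono n le_top)

theorem exists_finiteIndex_lowerCentralSeries_succ_eq_bot_of_finiteIndex [Group.FG G]
    (K : Subgroup G) [K.FiniteIndex] {n : ℕ}
    (hFC : ∀ x ∈ K.lowerCentralSeries n, IsFCElement x) :
    ∃ N : Subgroup G, N.FiniteIndex ∧ N.lowerCentralSeries (n + 1) = ⊥ := by
  obtain ⟨H, hH, hHn⟩ := exists_finiteIndex_lowerCentralSeries_succ_eq_bot (G := K) (n := n)
    fun x hx => (hFC x (top_subtype_lowerCentralSeries K n ▸ mem_map_of_mem _ hx))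
      |>.of_map_of_injective K.subtype_injective
  refine ⟨H.map K.subtype, ⟨?_⟩, ?_⟩
  · rw [index_map_subtype]
    exact mul_ne_zero hH.index_ne_zero FiniteIndex.index_ne_zero
  · rw [← map_lowerCentralSeries, hHn, Subgroup.map_bot]

theorem exists_finiteIndex_lowerCentralSeries_eq_bot_of_natFCSeries_eq_top
    (G : Type u) [Group G] [Group.FG G] (n : ℕ) (h : natFCSeries G n = ⊤) :
    ∃ N : Subgroup G, N.FiniteIndex ∧ N.lowerCentralSeries n = ⊥ := by
  induction n generalizing G with
  | zero => exact ⟨⊤, inferInstance, h.symm⟩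
  | succ n ih =>
    let π := QuotientGroup.mk' (natFCSeries G 1)
    have hπ : Function.Surjective π := QuotientGroup.mk'_surjective _
    have : Group.FG (G ⧸ natFCSeries G 1) := Group.fg_of_surjective hπ
    obtain ⟨M, hM, hMn⟩ := ih _ (natFCSeries_quotient_eq_top h)
    have : (M.comap π).FiniteIndex := ⟨(index_comap_of_surjective M hπ).trans_ne hM.index_ne_zero⟩
    have hker : (M.comap π).lowerCentralSeries n ≤ natFCSeries G 1 := by
      refine (QuotientGroup.ker_mk' (natFCSeries G 1)).le.trans' ?_
      rw [← Subgroup.map_eq_bot_iff, map_lowerCentralSeries,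
        map_comap_eq_self_of_surjective hπ, hMn]
    exact exists_finiteIndex_lowerCentralSeries_succ_eq_bot_of_finiteIndex (M.comap π)
      fun x hx => mem_natFCSeries_one_iff.mp (hker hx)

end

/-- A finitely generated group whose upper FC-series reaches G in n steps is virtually
nilpotent: it has a finite-index subgroup which is nilpotent of class at most n. -/
theorem fg_finite_fc_rank_virtually_nilpotent (G : Type u) [Group G] (hfg : Group.FG G)
    (n : ℕ) (h : natFCSeries G n = ⊤) :
    ∃ N : Subgroup G, N.FiniteIndex ∧ upperCentralSeries N n = ⊤ := by
  obtain ⟨N, hN, hNn⟩ := exists_finiteIndex_lowerCentralSeries_eq_bot_of_natFCSeries_eq_top G n h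
  exact ⟨N, hN, (upperCentralSeries_eq_top_iff_lowerCentralSeries_eq_bot N n).mpr hNn⟩
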